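/- Uniform boundedness of the quantity of interest away from caustics (two-wave case in 1D): let Q^ε(y) = Re[Q̃₁₁(y) + 2Q̃₁₂(y) + Q̃₂₂(y)] where Q̃_jj(y) = ∫ g_j(x,y)² ψ(x) dx and Q̃₁₂(y) = ∫ g₁(x,y) g₂(x,y) e^{i(φ₁(x,y) - φ₂(x,y))/ε} ψ(x) dx, with g_j, φ_j smooth, ψ ∈ C_c^∞, and ∂_x(φ₁ - φ₂)(x,y) ≠ 0 for all x ∈ supp(ψ) and y in a compact interval Γ. Then for every k ∈ ℕ there is a constant C_k independent of ε ∈ (0,1] such that sup_{y ∈ Γ} |d^k Q^ε / dy^k (y)| ≤ C_k. -/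

import Mathlib

open MeasureTheory Complex Set
open scoped ContDiff Manifold
section Aux

variable {E : Type*} [NormedAddCommGroup E] [NormedSpace ℝ E]

lemma hasDerivAt_partial_snd {f : ℝ × ℝ → E} {x y : ℝ}
    (hf : DifferentiableAt ℝ f (x, y)) :
    HasDerivAt (fun t => f (x, t)) (fderiv ℝ f (x, y) (0, 1)) y := by
  have h1 : HasDerivAt (fun t : ℝ => ((x, t) : ℝ × ℝ)) (0, 1) y :=
    (hasDerivAt_const y x).prodMk (hasDerivAt_id y)
  exact hf.hasFDerivAt.comp_hasDerivAt y h1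

lemma hasDerivAt_partial_fst {f : ℝ × ℝ → E} {x y : ℝ}
    (hf : DifferentiableAt ℝ f (x, y)) :
    HasDerivAt (fun t => f (t, y)) (fderiv ℝ f (x, y) (1, 0)) x := by
  have h1 : HasDerivAt (fun t : ℝ => ((t, y) : ℝ × ℝ)) (1, 0) x :=
    (hasDerivAt_id x).prodMk (hasDerivAt_const x y)
  exact hf.hasFDerivAt.comp_hasDerivAt x h1

lemma contDiff_pd {f : ℝ × ℝ → E} (hf : ContDiff ℝ ∞ f) (v : ℝ × ℝ) :
    ContDiff ℝ ∞ (fun p => fderiv ℝ f p v) :=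
  (hf.fderiv_right (m := ∞) (by simp)).clm_apply contDiff_const

lemma fderiv_eq_zero_outside {S : Set ℝ} (hS : IsClosed S) {f : ℝ × ℝ → E}
    (hf : ∀ p : ℝ × ℝ, p.1 ∉ S → f p = 0) {p : ℝ × ℝ} (hp : p.1 ∉ S) :
    fderiv ℝ f p = 0 := by
  have hopen : IsOpen {q : ℝ × ℝ | q.1 ∉ S} :=
    hS.isOpen_compl.preimage continuous_fst
  have hev : f =ᶠ[nhds p] (fun _ => 0) :=
    Filter.eventuallyEq_of_mem (hopen.mem_nhds hp) (fun q hq => hf q hq)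
  rw [hev.fderiv_eq]
  exact fderiv_const_apply 0

lemma integral_deriv_eq_zero' {u : ℝ → ℂ} (hu : ContDiff ℝ ∞ u)
    (hsupp : HasCompactSupport u) : ∫ x, deriv u x = 0 := by
  obtain ⟨M, hM⟩ := hsupp.isCompact.isBounded.subset_closedBall 0
  set N : ℝ := |M| + 2 with hN
  have hmem : ∀ x ∈ tsupport u, -N < x ∧ x < N := by
    intro x hx
    have := hM hx
    simp only [Metric.mem_closedBall, Real.dist_eq, sub_zero] at this
    have h1 := abs_le.1 this
    have h2 : M ≤ |M| := le_abs_self M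
    constructor <;> [nlinarith [h1.1]; nlinarith [h1.2]]
  have hzero : ∀ x, x ∉ Ioc (-N) N → deriv u x = 0 := by
    intro x hx
    by_contra h
    have hx' : x ∈ tsupport u := support_deriv_subset (by simpa using h)
    obtain ⟨h1, h2⟩ := hmem x hx'
    exact hx ⟨h1, le_of_lt h2⟩
  have hN0 : (0:ℝ) < N := by positivity
  have hNle : -N ≤ N := by linarith
  have hint : Continuous (deriv u) := hu.continuous_deriv (by simp)
  have h1 : ∫ x, deriv u x = ∫ x in Ioc (-N) N, deriv u x :=
    (setIntegral_eq_integral_of_forall_compl_eq_zero hzero).symm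
  have h2 : ∫ x in Ioc (-N) N, deriv u x = ∫ x in (-N)..N, deriv u x :=
    (intervalIntegral.integral_of_le hNle).symm
  have h3 : ∫ x in (-N)..N, deriv u x = u N - u (-N) :=
    intervalIntegral.integral_deriv_eq_sub
      (fun x _ => (hu.differentiable (by simp)).differentiableAt)
      (hint.intervalIntegrable _ _)
  have hu0 : ∀ t : ℝ, N ≤ |t| → u t = 0 := by
    intro t ht
    by_contra h
    have : t ∈ tsupport u := subset_tsupport u (by simpa using h)
    obtain ⟨l1, l2⟩ := hmem t this
    rcases abs_cases t with ⟨he, _⟩ | ⟨he, _⟩ <;> [linarith [he ▸ ht]; linarith [he ▸ ht]]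
  rw [h1, h2, h3, hu0 N (by rw [abs_of_pos hN0]), hu0 (-N) (by rw [abs_neg, abs_of_pos hN0]), sub_zero]

end Aux

section DUI

lemma contx {G : ℝ × ℝ → ℂ} (hG : Continuous G) (y : ℝ) :
    Continuous (fun x => G (x, y)) :=
  hG.comp (continuous_id.prodMk continuous_const)

lemma integrable_slice {G : ℝ × ℝ → ℂ} (hG : Continuous G) {S : Set ℝ}
    (hS : IsCompact S) (hGs : ∀ p : ℝ × ℝ, p.1 ∉ S → G p = 0) (y : ℝ) :
    Integrable (fun x => G (x, y)) := by
  refine (contx hG y).integrable_of_hasCompactSupport ?_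
  exact HasCompactSupport.intro hS (fun x hx => hGs (x, y) hx)

lemma hasDerivAt_integral_param {G : ℝ × ℝ → ℂ} (hG : ContDiff ℝ ∞ G)
    {S : Set ℝ} (hS : IsCompact S) (hGs : ∀ p : ℝ × ℝ, p.1 ∉ S → G p = 0)
    (y₀ : ℝ) :
    HasDerivAt (fun y => ∫ x, G (x, y)) (∫ x, fderiv ℝ G (x, y₀) (0, 1)) y₀ := by
  set G' : ℝ × ℝ → ℂ := fun p => fderiv ℝ G p (0, 1) with hG'
  have hG'c : Continuous G' := (contDiff_pd hG _).continuous
  have hT : IsCompact (S ×ˢ Metric.closedBall y₀ 1) :=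
    hS.prod (isCompact_closedBall _ _)
  obtain ⟨C, hC⟩ := hT.exists_bound_of_continuousOn hG'c.continuousOn
  have hG's : ∀ p : ℝ × ℝ, p.1 ∉ S → G' p = 0 := by
    intro p hp
    simp only [hG']
    rw [fderiv_eq_zero_outside hS.isClosed hGs hp]
    rfl
  refine (hasDerivAt_integral_of_dominated_loc_of_deriv_le
      (F := fun y x => G (x, y)) (F' := fun y x => G' (x, y))
      (bound := S.indicator fun _ => C) (Metric.ball_mem_nhds y₀ one_pos) ?_ ?_ ?_ ?_ ?_ ?_).2
  · exact Filter.Eventually.of_forall fun y =>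
      (contx hG.continuous y).aestronglyMeasurable
  · exact integrable_slice hG.continuous hS hGs y₀
  · exact (contx hG'c y₀).aestronglyMeasurable
  · refine Filter.Eventually.of_forall fun x => fun y hy => ?_
    by_cases hx : x ∈ S
    · rw [indicator_of_mem hx]
      exact hC (x, y) ⟨hx, Metric.ball_subset_closedBall hy⟩
    · rw [indicator_of_notMem hx]
      simp only [hG's (x, y) hx, norm_zero, le_refl]
  · exact (integrable_indicator_iff hS.measurableSet).2
      (integrableOn_const hS.measure_lt_top.ne)
  · refine Filter.Eventually.of_forall fun x => fun y hy => ?_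
    exact hasDerivAt_partial_snd ((hG.differentiable (by simp)) _)

end DUI

/-- Uniform boundedness in `ε` of all `y`-derivatives of the quantity of
interest for a two-wave field in 1D, away from stationary points of the phase
difference. -/
theorem qoi_derivatives_uniformly_bounded
    (g₁ g₂ φ₁ φ₂ : ℝ → ℝ → ℝ)
    (hg₁ : ContDiff ℝ (⊤ : ℕ∞) fun p : ℝ × ℝ => g₁ p.1 p.2)
    (hg₂ : ContDiff ℝ (⊤ : ℕ∞) fun p : ℝ × ℝ => g₂ p.1 p.2)
    (hφ₁ : ContDiff ℝ (⊤ : ℕ∞) fun p : ℝ × ℝ => φ₁ p.1 p.2)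
    (hφ₂ : ContDiff ℝ (⊤ : ℕ∞) fun p : ℝ × ℝ => φ₂ p.1 p.2)
    (R : ℝ) (hsupp : ∀ x y, R < |x| → g₁ x y = 0 ∧ g₂ x y = 0)
    (ψ : ℝ → ℝ) (hψ : ContDiff ℝ (⊤ : ℕ∞) ψ) (hψc : HasCompactSupport ψ)
    (a b : ℝ) (hab : a ≤ b)
    (δ : ℝ) (hδ : 0 < δ)
    (hphase : ∀ x ∈ tsupport ψ, ∀ y ∈ Icc a b,
      δ ≤ |deriv (fun x' => φ₁ x' y - φ₂ x' y) x|) :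
    ∀ k : ℕ, ∃ C : ℝ, ∀ ε : ℝ, 0 < ε → ε ≤ 1 → ∀ y ∈ Icc a b,
      |iteratedDeriv k (fun y' =>
        ((∫ x, ((g₁ x y' : ℝ) ^ 2 : ℂ) * (ψ x : ℂ))
          + 2 * (∫ x, ((g₁ x y' : ℝ) : ℂ) * ((g₂ x y' : ℝ) : ℂ)
              * Complex.exp (Complex.I * ((φ₁ x y' - φ₂ x y' : ℝ) : ℂ) / (ε : ℂ))
              * (ψ x : ℂ))
          + (∫ x, ((g₂ x y' : ℝ) ^ 2 : ℂ) * (ψ x : ℂ))).re) y| ≤ C := by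
  intro k
  -- basic smoothness downgrades
  have hg₁' : ContDiff ℝ ∞ fun p : ℝ × ℝ => g₁ p.1 p.2 := hg₁.of_le (by simp)
  have hg₂' : ContDiff ℝ ∞ fun p : ℝ × ℝ => g₂ p.1 p.2 := hg₂.of_le (by simp)
  have hψ' : ContDiff ℝ ∞ ψ := hψ.of_le (by simp)
  set S : Set ℝ := tsupport ψ with hSdef
  have hScomp : IsCompact S := hψc
  set F : ℝ × ℝ → ℝ := fun p => φ₁ p.1 p.2 - φ₂ p.1 p.2 with hFdef
  have hFc : ContDiff ℝ ∞ F := (hφ₁.of_le (by simp)).sub (hφ₂.of_le (by simp))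
  set Dx : ℝ × ℝ → ℝ := fun p => fderiv ℝ F p (1, 0) with hDxdef
  set Dy : ℝ × ℝ → ℝ := fun p => fderiv ℝ F p (0, 1) with hDydef
  have hDxc : ContDiff ℝ ∞ Dx := contDiff_pd hFc _
  have hDyc : ContDiff ℝ ∞ Dy := contDiff_pd hFc _
  -- phase derivative identity
  have hphase' : ∀ p : ℝ × ℝ, p ∈ S ×ˢ Icc a b → δ ≤ |Dx p| := by
    rintro ⟨x, y⟩ ⟨hx, hy⟩
    have h1 := hphase x hx y hy
    have h2 : HasDerivAt (fun t => F (t, y)) (Dx (x, y)) x :=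
      hasDerivAt_partial_fst ((hFc.differentiable (by simp)) _)
    have h3 : deriv (fun x' => φ₁ x' y - φ₂ x' y) x = Dx (x, y) := h2.deriv
    rwa [h3] at h1
  set U : Set (ℝ × ℝ) := {p | Dx p ≠ 0} with hUdef
  have hUopen : IsOpen U := isOpen_compl_singleton.preimage hDxc.continuous
  have hKU : S ×ˢ Icc a b ⊆ U := by
    rintro p hp h0
    have := hphase' p hp
    rw [h0, abs_zero] at this
    linarith
  -- thickening: enlarge the parameter interval slightly
  obtain ⟨θ, hθpos, hθ⟩ :=
    (hScomp.prod isCompact_Icc).exists_thickening_subset_open hUopen hKU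
  set η : ℝ := θ / 2 with hηdef
  have hηpos : 0 < η := by positivity
  set Γ' : Set ℝ := Icc (a - η) (b + η) with hΓ'def
  set O : Set ℝ := Ioo (a - η) (b + η) with hOdef
  have hIccO : Icc a b ⊆ O := fun y hy => ⟨by linarith [hy.1], by linarith [hy.2]⟩
  have hOΓ' : O ⊆ Γ' := Ioo_subset_Icc_self
  have hK'U : S ×ˢ Γ' ⊆ U := by
    rintro ⟨x, y⟩ ⟨hx, hy⟩
    apply hθ
    rw [Metric.mem_thickening_iff]
    refine ⟨(x, max a (min y b)), ⟨hx, le_max_left _ _, max_le hab (min_le_right _ _)⟩, ?_⟩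
    have habs : |y - max a (min y b)| ≤ η := by
      rcases le_total y a with h1 | h1
      · rw [min_eq_left (h1.trans hab), max_eq_left h1, _root_.abs_sub_comm,
          _root_.abs_of_nonneg (by linarith)]
        linarith [hy.1]
      · rcases le_total y b with h2 | h2
        · rw [min_eq_left h2, max_eq_right h1, sub_self, abs_zero]; linarith
        · rw [min_eq_right h2, max_eq_right hab, _root_.abs_of_nonneg (by linarith)]
          linarith [hy.2]
    calc dist ((x : ℝ), y) (x, max a (min y b))
        = max (dist x x) (dist y (max a (min y b))) := Prod.dist_eq
      _ ≤ η := by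
          rw [dist_self, Real.dist_eq]
          exact max_le (le_of_lt hηpos) habs
      _ < θ := by rw [hηdef]; linarith
  -- smooth cutoff
  have hK'comp : IsCompact (S ×ˢ Γ') := hScomp.prod isCompact_Icc
  obtain ⟨L, hLcomp, hKL, hLU⟩ := exists_compact_between hK'comp hUopen hK'U
  obtain ⟨χ, hχ0, hχ1, hχmem⟩ :=
    exists_contMDiffMap_zero_one_of_isClosed (𝓘(ℝ, ℝ × ℝ)) (n := (⊤ : ℕ∞)) (isOpen_interior.isClosed_compl)
      hK'comp.isClosed
      (disjoint_left.2 fun p hp hp' => hp (hKL hp'))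
  have hχsm : ContDiff ℝ ∞ (χ : ℝ × ℝ → ℝ) := by
    have := χ.contMDiff.contDiff (𝕜 := ℝ)
    exact this
  -- the smooth correction function q = χ · Dy / Dx
  set q : ℝ × ℝ → ℝ := fun p => χ p * ((Dx p)⁻¹ * Dy p) with hqdef
  have hqsm : ContDiff ℝ ∞ q := by
    rw [contDiff_iff_contDiffAt]
    intro p
    by_cases hp : p ∈ U
    · exact hχsm.contDiffAt.mul
        ((hDxc.contDiffAt.inv hp).mul hDyc.contDiffAt)
    · have hpL : p ∉ L := fun h => hp (hLU h)
      have hev : q =ᶠ[nhds p] (fun _ => 0) := by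
        refine Filter.eventuallyEq_of_mem
          (hLcomp.isClosed.isOpen_compl.mem_nhds hpL) (fun r hr => ?_)
        have : χ r = 0 := hχ0 (fun hi => hr (interior_subset hi))
        simp [hqdef, this]
      exact (contDiffAt_const (c := 0)).congr_of_eventuallyEq hev
  have hq1 : ∀ p : ℝ × ℝ, p ∈ S ×ˢ Γ' → q p * Dx p = Dy p := by
    intro p hp
    have hχp : χ p = 1 := hχ1 hp
    have hDxp : Dx p ≠ 0 := hK'U hp
    rw [hqdef]
    field_simp [hχp]
    rw [hχp, one_mul]
  -- complex amplitude machinery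
  set qC : ℝ × ℝ → ℂ := fun p => (q p : ℂ) with hqCdef
  have hqCsm : ContDiff ℝ ∞ qC := Complex.ofRealCLM.contDiff.comp hqsm
  set step : (ℝ × ℝ → ℂ) → (ℝ × ℝ → ℂ) :=
    fun f p => fderiv ℝ f p (0, 1) - fderiv ℝ (fun p' => qC p' * f p') p (1, 0)
    with hstepdef
  set a1 : ℝ × ℝ → ℂ := fun p => ((g₁ p.1 p.2 ^ 2 * ψ p.1 : ℝ) : ℂ) with ha1def
  set a2 : ℝ × ℝ → ℂ := fun p => ((g₁ p.1 p.2 * g₂ p.1 p.2 * ψ p.1 : ℝ) : ℂ)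
    with ha2def
  set a3 : ℝ × ℝ → ℂ := fun p => ((g₂ p.1 p.2 ^ 2 * ψ p.1 : ℝ) : ℂ) with ha3def
  have ha1sm : ContDiff ℝ ∞ a1 :=
    Complex.ofRealCLM.contDiff.comp ((hg₁'.pow 2).mul (hψ'.comp contDiff_fst))
  have ha2sm : ContDiff ℝ ∞ a2 :=
    Complex.ofRealCLM.contDiff.comp ((hg₁'.mul hg₂').mul (hψ'.comp contDiff_fst))
  have ha3sm : ContDiff ℝ ∞ a3 :=
    Complex.ofRealCLM.contDiff.comp ((hg₂'.pow 2).mul (hψ'.comp contDiff_fst))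
  have hψ0 : ∀ p : ℝ × ℝ, p.1 ∉ S → ψ p.1 = 0 :=
    fun p hp => image_eq_zero_of_notMem_tsupport hp
  have ha1s : ∀ p : ℝ × ℝ, p.1 ∉ S → a1 p = 0 := by
    intro p hp; simp [ha1def, hψ0 p hp]
  have ha2s : ∀ p : ℝ × ℝ, p.1 ∉ S → a2 p = 0 := by
    intro p hp; simp [ha2def, hψ0 p hp]
  have ha3s : ∀ p : ℝ × ℝ, p.1 ∉ S → a3 p = 0 := by
    intro p hp; simp [ha3def, hψ0 p hp]
  set pyf : (ℝ × ℝ → ℂ) → (ℝ × ℝ → ℂ) := fun f p => fderiv ℝ f p (0, 1)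
    with hpyfdef
  set B1 : ℕ → ℝ × ℝ → ℂ := fun n => pyf^[n] a1 with hB1def
  set B2 : ℕ → ℝ × ℝ → ℂ := fun n => pyf^[n] a3 with hB2def
  set A : ℕ → ℝ × ℝ → ℂ := fun n => step^[n] a2 with hAdef
  have hB1succ : ∀ n, B1 (n + 1) = pyf (B1 n) := by
    intro n; simp only [hB1def]; exact Function.iterate_succ_apply' _ n a1
  have hB2succ : ∀ n, B2 (n + 1) = pyf (B2 n) := by
    intro n; simp only [hB2def]; exact Function.iterate_succ_apply' _ n a3
  have hAsucc : ∀ n, A (n + 1) = step (A n) := by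
    intro n; simp only [hAdef]; exact Function.iterate_succ_apply' _ n a2
  have hpy_sm : ∀ f : ℝ × ℝ → ℂ, ContDiff ℝ ∞ f → ContDiff ℝ ∞ (pyf f) :=
    fun f hf => contDiff_pd hf _
  have hpy_supp : ∀ f : ℝ × ℝ → ℂ, (∀ p : ℝ × ℝ, p.1 ∉ S → f p = 0) →
      ∀ p : ℝ × ℝ, p.1 ∉ S → pyf f p = 0 := by
    intro f hf p hp
    simp only [hpyfdef]
    rw [fderiv_eq_zero_outside hScomp.isClosed hf hp]; rfl
  have hstep_sm : ∀ f : ℝ × ℝ → ℂ, ContDiff ℝ ∞ f → ContDiff ℝ ∞ (step f) := by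
    intro f hf
    simp only [hstepdef]
    exact (contDiff_pd hf _).sub (contDiff_pd (hqCsm.mul hf) _)
  have hstep_supp : ∀ f : ℝ × ℝ → ℂ, (∀ p : ℝ × ℝ, p.1 ∉ S → f p = 0) →
      ∀ p : ℝ × ℝ, p.1 ∉ S → step f p = 0 := by
    intro f hf p hp
    simp only [hstepdef]
    rw [fderiv_eq_zero_outside hScomp.isClosed hf hp,
      fderiv_eq_zero_outside hScomp.isClosed
        (f := fun p' => qC p' * f p') (fun r hr => by show qC r * f r = 0; rw [hf r hr, mul_zero]) hp]
    simp
  have hB1sm : ∀ n, ContDiff ℝ ∞ (B1 n) := by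
    intro n; induction n with
    | zero => exact ha1sm
    | succ n ih => rw [hB1succ n]; exact hpy_sm _ ih
  have hB2sm : ∀ n, ContDiff ℝ ∞ (B2 n) := by
    intro n; induction n with
    | zero => exact ha3sm
    | succ n ih => rw [hB2succ n]; exact hpy_sm _ ih
  have hAsm : ∀ n, ContDiff ℝ ∞ (A n) := by
    intro n; induction n with
    | zero => exact ha2sm
    | succ n ih => rw [hAsucc n]; exact hstep_sm _ ih
  have hB1s : ∀ n, ∀ p : ℝ × ℝ, p.1 ∉ S → B1 n p = 0 := by
    intro n; induction n with
    | zero => exact ha1s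
    | succ n ih => rw [hB1succ n]; exact hpy_supp _ ih
  have hB2s : ∀ n, ∀ p : ℝ × ℝ, p.1 ∉ S → B2 n p = 0 := by
    intro n; induction n with
    | zero => exact ha3s
    | succ n ih => rw [hB2succ n]; exact hpy_supp _ ih
  have hAs : ∀ n, ∀ p : ℝ × ℝ, p.1 ∉ S → A n p = 0 := by
    intro n; induction n with
    | zero => exact ha2s
    | succ n ih => rw [hAsucc n]; exact hstep_supp _ ih
  -- uniform bounds for the amplitudes at level k
  obtain ⟨C1, hC1⟩ := (hScomp.prod (isCompact_Icc (a := a) (b := b))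
    ).exists_bound_of_continuousOn (hB1sm k).continuous.continuousOn
  obtain ⟨C2, hC2⟩ := (hScomp.prod (isCompact_Icc (a := a) (b := b))
    ).exists_bound_of_continuousOn (hAsm k).continuous.continuousOn
  obtain ⟨C3, hC3⟩ := (hScomp.prod (isCompact_Icc (a := a) (b := b))
    ).exists_bound_of_continuousOn (hB2sm k).continuous.continuousOn
  refine ⟨C1 * (volume S).toReal + 2 * (C2 * (volume S).toReal)
    + C3 * (volume S).toReal, ?_⟩
  intro ε hε0 hε1 y₀ hy₀
  -- the oscillatory factor
  set Eε : ℝ × ℝ → ℂ := fun p => Complex.exp (Complex.I * (F p : ℂ) / (ε : ℂ))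
    with hEdef
  have hEsm : ContDiff ℝ ∞ Eε :=
    ((contDiff_const.mul (Complex.ofRealCLM.contDiff.comp hFc)).div_const _).cexp
  have hEnorm : ∀ p, ‖Eε p‖ = 1 := by
    intro p
    simp [hEdef, Complex.norm_exp, Complex.div_ofReal_re,
      Complex.mul_re]
  have hEdy : ∀ x t : ℝ, HasDerivAt (fun s => Eε (x, s))
      (Eε (x, t) * (Complex.I * ((Dy (x, t) : ℝ) : ℂ) / (ε : ℂ))) t := by
    intro x t
    have h0 : HasDerivAt (fun s => F (x, s)) (Dy (x, t)) t :=
      hasDerivAt_partial_snd ((hFc.differentiable (by simp)) _)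
    have h1 : HasDerivAt (fun s => Complex.I * ((F (x, s) : ℝ) : ℂ) / (ε : ℂ))
        (Complex.I * ((Dy (x, t) : ℝ) : ℂ) / (ε : ℂ)) t :=
      (h0.ofReal_comp.const_mul Complex.I).div_const _
    exact h1.cexp
  have hEdx : ∀ x t : ℝ, HasDerivAt (fun s => Eε (s, t))
      (Eε (x, t) * (Complex.I * ((Dx (x, t) : ℝ) : ℂ) / (ε : ℂ))) x := by
    intro x t
    have h0 : HasDerivAt (fun s => F (s, t)) (Dx (x, t)) x :=
      hasDerivAt_partial_fst ((hFc.differentiable (by simp)) _)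
    have h1 : HasDerivAt (fun s => Complex.I * ((F (s, t) : ℝ) : ℂ) / (ε : ℂ))
        (Complex.I * ((Dx (x, t) : ℝ) : ℂ) / (ε : ℂ)) x :=
      (h0.ofReal_comp.const_mul Complex.I).div_const _
    exact h1.cexp
  set T : ℝ → ℝ := fun y' =>
      ((∫ x, ((g₁ x y' : ℝ) ^ 2 : ℂ) * (ψ x : ℂ))
        + 2 * (∫ x, ((g₁ x y' : ℝ) : ℂ) * ((g₂ x y' : ℝ) : ℂ)
            * Complex.exp (Complex.I * ((φ₁ x y' - φ₂ x y' : ℝ) : ℂ) / (ε : ℂ))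
            * (ψ x : ℂ))
        + (∫ x, ((g₂ x y' : ℝ) ^ 2 : ℂ) * (ψ x : ℂ))).re with hTdef
  -- the key induction
  have key : ∀ n, ∀ y ∈ O, iteratedDeriv n T y =
      ((∫ x, B1 n (x, y)) + 2 * (∫ x, A n (x, y) * Eε (x, y))
        + (∫ x, B2 n (x, y))).re := by
    intro n
    induction n with
    | zero =>
      intro y hy
      rw [iteratedDeriv_zero]
      have e1 : (∫ x, ((g₁ x y : ℝ) ^ 2 : ℂ) * (ψ x : ℂ)) = ∫ x, B1 0 (x, y) := by
        congr 1; funext x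
        simp only [hB1def, Function.iterate_zero, id_eq, ha1def]
        push_cast; ring
      have e2 : (∫ x, ((g₁ x y : ℝ) : ℂ) * ((g₂ x y : ℝ) : ℂ)
          * Complex.exp (Complex.I * ((φ₁ x y - φ₂ x y : ℝ) : ℂ) / (ε : ℂ))
          * (ψ x : ℂ)) = ∫ x, A 0 (x, y) * Eε (x, y) := by
        congr 1; funext x
        simp only [hAdef, Function.iterate_zero, id_eq, ha2def, hEdef, hFdef]
        push_cast; ring
      have e3 : (∫ x, ((g₂ x y : ℝ) ^ 2 : ℂ) * (ψ x : ℂ)) = ∫ x, B2 0 (x, y) := by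
        congr 1; funext x
        simp only [hB2def, Function.iterate_zero, id_eq, ha3def]
        push_cast; ring
      simp only [hTdef]
      rw [e1, e2, e3]
    | succ n ih =>
      intro y hy
      have hOopen : IsOpen O := isOpen_Ioo
      have hEq : iteratedDeriv n T =ᶠ[nhds y] fun y' =>
          ((∫ x, B1 n (x, y')) + 2 * (∫ x, A n (x, y') * Eε (x, y'))
            + (∫ x, B2 n (x, y'))).re :=
        Filter.eventually_of_mem (hOopen.mem_nhds hy) ih
      rw [iteratedDeriv_succ, hEq.deriv_eq]
      -- derivatives of the three integral functions
      have h1 : HasDerivAt (fun y' => ∫ x, B1 n (x, y'))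
          (∫ x, B1 (n + 1) (x, y)) y := by
        rw [hB1succ n]
        simp only [hpyfdef]
        exact hasDerivAt_integral_param (hB1sm n) hScomp (hB1s n) y
      have h3 : HasDerivAt (fun y' => ∫ x, B2 n (x, y'))
          (∫ x, B2 (n + 1) (x, y)) y := by
        rw [hB2succ n]
        simp only [hpyfdef]
        exact hasDerivAt_integral_param (hB2sm n) hScomp (hB2s n) y
      -- the oscillatory integral
      have hGsm : ContDiff ℝ ∞ (fun p => A n p * Eε p) := (hAsm n).mul hEsm
      have hGs : ∀ p : ℝ × ℝ, p.1 ∉ S → A n p * Eε p = 0 :=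
        fun p hp => by rw [hAs n p hp, zero_mul]
      have h2 : HasDerivAt (fun y' => ∫ x, A n (x, y') * Eε (x, y'))
          (∫ x, fderiv ℝ (fun p => A n p * Eε p) (x, y) (0, 1)) y :=
        hasDerivAt_integral_param hGsm hScomp hGs y
      -- compute the integrand of the derivative
      have hpt : ∀ x : ℝ, fderiv ℝ (fun p => A n p * Eε p) (x, y) (0, 1)
          = fderiv ℝ (A n) (x, y) (0, 1) * Eε (x, y)
            + A n (x, y) * (Eε (x, y) * (Complex.I * ((Dy (x, y) : ℝ) : ℂ) / (ε : ℂ))) := by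
        intro x
        have hd : HasDerivAt (fun t => A n (x, t) * Eε (x, t))
            (fderiv ℝ (A n) (x, y) (0, 1) * Eε (x, y)
              + A n (x, y) * (Eε (x, y) * (Complex.I * ((Dy (x, y) : ℝ) : ℂ) / (ε : ℂ)))) y :=
          (hasDerivAt_partial_snd (((hAsm n).differentiable (by simp)) _)).mul (hEdy x y)
        have hd2 : HasDerivAt (fun t => A n (x, t) * Eε (x, t))
            (fderiv ℝ (fun p => A n p * Eε p) (x, y) (0, 1)) y :=
          hasDerivAt_partial_snd ((hGsm.differentiable (by simp)) _)
        exact hd2.unique hd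
      -- integration by parts
      set W : ℝ × ℝ → ℂ := fun p' => qC p' * A n p' with hWdef
      have hWsm : ContDiff ℝ ∞ W := hqCsm.mul (hAsm n)
      have hWs : ∀ p : ℝ × ℝ, p.1 ∉ S → W p = 0 := by
        intro p hp
        simp only [hWdef]
        rw [hAs n p hp, mul_zero]
      have husm : ContDiff ℝ ∞ (fun x => W (x, y) * Eε (x, y)) :=
        (hWsm.mul hEsm).comp (contDiff_id.prodMk contDiff_const)
      have husupp : HasCompactSupport (fun x => W (x, y) * Eε (x, y)) :=
        HasCompactSupport.intro hScomp
          (fun x hx => by rw [hWs (x, y) hx, zero_mul])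
      have hud : ∀ x : ℝ, deriv (fun x' => W (x', y) * Eε (x', y)) x
          = fderiv ℝ W (x, y) (1, 0) * Eε (x, y)
            + W (x, y) * (Eε (x, y) * (Complex.I * ((Dx (x, y) : ℝ) : ℂ) / (ε : ℂ))) :=
        fun x => ((hasDerivAt_partial_fst ((hWsm.differentiable (by simp)) _)).mul
          (hEdx x y)).deriv
      have hzero : (∫ x, (fderiv ℝ W (x, y) (1, 0) * Eε (x, y)
          + W (x, y) * (Eε (x, y) * (Complex.I * ((Dx (x, y) : ℝ) : ℂ) / (ε : ℂ))))) = 0 := by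
        rw [show (fun x => fderiv ℝ W (x, y) (1, 0) * Eε (x, y)
            + W (x, y) * (Eε (x, y) * (Complex.I * ((Dx (x, y) : ℝ) : ℂ) / (ε : ℂ))))
            = deriv (fun x' => W (x', y) * Eε (x', y)) from funext fun x => (hud x).symm]
        exact integral_deriv_eq_zero' husm husupp
      -- integrability of the pieces
      have int1 : Integrable (fun x => fderiv ℝ W (x, y) (1, 0) * Eε (x, y)) := by
        refine integrable_slice (G := fun p => fderiv ℝ W p (1, 0) * Eε p)
          ((contDiff_pd hWsm _).continuous.mul hEsm.continuous) hScomp ?_ y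
        intro p hp
        show fderiv ℝ W p (1, 0) * Eε p = 0
        rw [fderiv_eq_zero_outside hScomp.isClosed hWs hp]
        simp
      have int2 : Integrable (fun x => W (x, y)
          * (Eε (x, y) * (Complex.I * ((Dx (x, y) : ℝ) : ℂ) / (ε : ℂ)))) := by
        refine integrable_slice
          (G := fun p => W p * (Eε p * (Complex.I * ((Dx p : ℝ) : ℂ) / (ε : ℂ))))
          (hWsm.continuous.mul (hEsm.continuous.mul
            ((continuous_const.mul
              (Complex.continuous_ofReal.comp hDxc.continuous)).div_const _))) hScomp ?_ y
        intro p hp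
        show W p * _ = 0
        rw [hWs p hp, zero_mul]
      have int3 : Integrable (fun x => fderiv ℝ (A n) (x, y) (0, 1) * Eε (x, y)) := by
        refine integrable_slice (G := fun p => fderiv ℝ (A n) p (0, 1) * Eε p)
          ((contDiff_pd (hAsm n) _).continuous.mul hEsm.continuous) hScomp ?_ y
        intro p hp
        show fderiv ℝ (A n) p (0, 1) * Eε p = 0
        rw [fderiv_eq_zero_outside hScomp.isClosed (hAs n) hp]
        simp
      have int4 : Integrable (fun x => A n (x, y)
          * (Eε (x, y) * (Complex.I * ((Dy (x, y) : ℝ) : ℂ) / (ε : ℂ)))) := by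
        refine integrable_slice
          (G := fun p => A n p * (Eε p * (Complex.I * ((Dy p : ℝ) : ℂ) / (ε : ℂ))))
          ((hAsm n).continuous.mul (hEsm.continuous.mul
            ((continuous_const.mul
              (Complex.continuous_ofReal.comp hDyc.continuous)).div_const _))) hScomp ?_ y
        intro p hp
        show A n p * _ = 0
        rw [hAs n p hp, zero_mul]
      -- the pointwise phase identity
      have hyΓ' : y ∈ Γ' := hOΓ' hy
      have hpt2 : ∀ x : ℝ, W (x, y)
          * (Eε (x, y) * (Complex.I * ((Dx (x, y) : ℝ) : ℂ) / (ε : ℂ)))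
          = A n (x, y) * (Eε (x, y) * (Complex.I * ((Dy (x, y) : ℝ) : ℂ) / (ε : ℂ))) := by
        intro x
        by_cases hx : x ∈ S
        · have hqq : q (x, y) * Dx (x, y) = Dy (x, y) := hq1 (x, y) ⟨hx, hyΓ'⟩
          have hcast : ((Dy (x, y) : ℝ) : ℂ) = ((q (x, y) : ℝ) : ℂ) * ((Dx (x, y) : ℝ) : ℂ) := by
            rw [← hqq, Complex.ofReal_mul]
          simp only [hWdef, hqCdef]
          rw [hcast]
          ring
        · rw [hWs (x, y) hx, hAs n (x, y) hx, zero_mul, zero_mul]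
      -- conclude the IBP identity
      have hibp : (∫ x, A n (x, y)
          * (Eε (x, y) * (Complex.I * ((Dy (x, y) : ℝ) : ℂ) / (ε : ℂ))))
          = - ∫ x, fderiv ℝ W (x, y) (1, 0) * Eε (x, y) := by
        have hsplit := integral_add int1 int2
        rw [hzero] at hsplit
        have h5 : (∫ x, W (x, y)
            * (Eε (x, y) * (Complex.I * ((Dx (x, y) : ℝ) : ℂ) / (ε : ℂ))))
            = ∫ x, A n (x, y)
            * (Eε (x, y) * (Complex.I * ((Dy (x, y) : ℝ) : ℂ) / (ε : ℂ))) := by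
          congr 1; funext x; exact hpt2 x
        rw [h5] at hsplit
        exact eq_neg_of_add_eq_zero_right hsplit.symm
      -- assemble the derivative of the oscillatory term
      have hder : (∫ x, fderiv ℝ (fun p => A n p * Eε p) (x, y) (0, 1))
          = ∫ x, A (n + 1) (x, y) * Eε (x, y) := by
        have e0 : (∫ x, fderiv ℝ (fun p => A n p * Eε p) (x, y) (0, 1))
            = ∫ x, (fderiv ℝ (A n) (x, y) (0, 1) * Eε (x, y)
              + A n (x, y) * (Eε (x, y)
                * (Complex.I * ((Dy (x, y) : ℝ) : ℂ) / (ε : ℂ)))) := by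
          congr 1; funext x; exact hpt x
        rw [e0, integral_add int3 int4, hibp, ← sub_eq_add_neg,
          ← integral_sub int3 int1]
        congr 1; funext x
        rw [hAsucc n]
        simp only [hstepdef, hWdef]
        rw [sub_mul]
      have h2' : HasDerivAt (fun y' => ∫ x, A n (x, y') * Eε (x, y'))
          (∫ x, A (n + 1) (x, y) * Eε (x, y)) y := hder ▸ h2
      have hsum := (h1.add (h2'.const_mul (2 : ℂ))).add h3
      have hre := Complex.reCLM.hasFDerivAt.comp_hasDerivAt y hsum
      have hfin := hre.deriv
      simp only [Function.comp_def, Complex.reCLM_apply] at hfin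
      exact hfin
  -- final bound
  have hyO : y₀ ∈ O := hIccO hy₀
  have hkey := key k y₀ hyO
  rw [hkey]
  have hb1 : ‖∫ x, B1 k (x, y₀)‖ ≤ C1 * (volume S).toReal := by
    rw [← setIntegral_eq_integral_of_forall_compl_eq_zero
      (fun x hx => hB1s k (x, y₀) hx)]
    exact norm_setIntegral_le_of_norm_le_const hScomp.measure_lt_top
      (fun x hx => hC1 (x, y₀) ⟨hx, hy₀⟩)
  have hb3 : ‖∫ x, B2 k (x, y₀)‖ ≤ C3 * (volume S).toReal := by
    rw [← setIntegral_eq_integral_of_forall_compl_eq_zero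
      (fun x hx => hB2s k (x, y₀) hx)]
    exact norm_setIntegral_le_of_norm_le_const hScomp.measure_lt_top
      (fun x hx => hC3 (x, y₀) ⟨hx, hy₀⟩)
  have hb2 : ‖∫ x, A k (x, y₀) * Eε (x, y₀)‖ ≤ C2 * (volume S).toReal := by
    rw [← setIntegral_eq_integral_of_forall_compl_eq_zero
      (fun x hx => by rw [hAs k (x, y₀) hx, zero_mul])]
    refine norm_setIntegral_le_of_norm_le_const hScomp.measure_lt_top
      (fun x hx => ?_)
    rw [norm_mul, hEnorm, mul_one]
    exact hC2 (x, y₀) ⟨hx, hy₀⟩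
  set z1 := ∫ x, B1 k (x, y₀)
  set z2 := ∫ x, A k (x, y₀) * Eε (x, y₀)
  set z3 := ∫ x, B2 k (x, y₀)
  have habs : |(z1 + 2 * z2 + z3).re| ≤ ‖z1 + 2 * z2 + z3‖ := by
    exact Complex.abs_re_le_norm _
  have htri : ‖z1 + 2 * z2 + z3‖ ≤ ‖z1‖ + ‖(2 : ℂ) * z2‖ + ‖z3‖ :=
    (norm_add_le _ _).trans (add_le_add_left (norm_add_le _ _) _)
  have h2n : ‖(2 : ℂ) * z2‖ = 2 * ‖z2‖ := by
    rw [norm_mul]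
    norm_num
  have := h2n ▸ htri
  linarith [hb1, hb2, hb3]
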